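/- arXiv:2605.31270 — 6 statements merged into one kernel-verified Lean document; each statement's English description precedes it below -/
import Mathlib

section
/- Let β, δβ ∈ ℝ with β ≥ 0 and δβ ≥ 0. Then e(β,δβ,1) = 0, and for every j ≥ 1 the residual satisfies the recursion e(β,δβ,j+1) = −ψ(β,j)·δβ/(j+1) − ψ(δβ,j)·β/(j+1) + e(β,δβ,j)·(j−(β+δβ))/(j+1). In particular, for every j ≥ 1, ψ(β+δβ,j) = ψ(β,j) + ψ(δβ,j) + e(β,δβ,j). -/
/-- Grünwald–Letnikov weight: ψ(α,0) = 1 and ψ(α,j) = ∏_{m=1}^{j} (m−1−α)/m for j ≥ 1. -/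
noncomputable def psi (α : ℝ) (j : ℕ) : ℝ :=
  ∏ m ∈ Finset.Icc 1 j, (((m : ℝ) - 1 - α) / (m : ℝ))

/-- Fractional difference: `fracDiff α x k = (Δ^α x)[k+1]`, componentwise. -/
noncomputable def fracDiff {n : ℕ} (α : Fin n → ℝ) (x : ℕ → Fin n → ℝ) (k : ℕ) :
    Fin n → ℝ :=
  fun i => x (k + 1) i + ∑ j ∈ Finset.range (k + 1), psi (α i) (j + 1) * x (k - j) i

/-- Diagonal matrix D̃^{α,δα}_j with i-th entry ψ(α_i+δα_i,j) − ψ(α_i,j). -/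
noncomputable def Dtil {n : ℕ} (α δα : Fin n → ℝ) (j : ℕ) : Matrix (Fin n) (Fin n) ℝ :=
  Matrix.diagonal fun i => psi (α i + δα i) j - psi (α i) j

/-- Diagonal matrix D̃^{0,α}_j with i-th entry ψ(α_i,j). -/
noncomputable def D0 {n : ℕ} (α : Fin n → ℝ) (j : ℕ) : Matrix (Fin n) (Fin n) ℝ :=
  Matrix.diagonal fun i => psi (α i) j

/-- Modified network matrices: Ã_0 = A_d − D̃^{0,α_d}_1, Ã_j = −D̃^{0,α_d}_{j+1} for j ≥ 1. -/
noncomputable def Atil {n : ℕ} (Ad : Matrix (Fin n) (Fin n) ℝ) (αd : Fin n → ℝ) :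
    ℕ → Matrix (Fin n) (Fin n) ℝ
  | 0 => Ad - D0 αd 1
  | j + 1 => -D0 αd (j + 2)

/-- Fractional state-transition matrices: G_0 = I, G_k = Σ_{j=0}^{k−1} Ã_j G_{k−1−j}. -/
noncomputable def Gmat {n : ℕ} (Ad : Matrix (Fin n) (Fin n) ℝ) (αd : Fin n → ℝ) :
    ℕ → Matrix (Fin n) (Fin n) ℝ
  | 0 => 1
  | k + 1 => ∑ j ∈ Finset.range (k + 1), Atil Ad αd j * Gmat Ad αd (k - j)
  decreasing_by omega

/-- Residual e(β,δβ,j) := ψ(β+δβ,j) − ψ(β,j) − ψ(δβ,j). -/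
noncomputable def resid (β δβ : ℝ) (j : ℕ) : ℝ :=
  psi (β + δβ) j - psi β j - psi δβ j

lemma psi_succ (α : ℝ) (j : ℕ) :
    psi α (j + 1) = psi α j * (((j : ℝ) - α) / ((j : ℝ) + 1)) := by
  unfold psi
  rw [Finset.prod_Icc_succ_top (by omega)]
  congr 1
  push_cast
  ring

/-- decomposition of fractional differences under order perturbations. -/
theorem stmt2 (β δβ : ℝ) (hβ : 0 ≤ β) (hδβ : 0 ≤ δβ) :
    resid β δβ 1 = 0 ∧
    (∀ j : ℕ, 1 ≤ j →
      resid β δβ (j + 1) =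
        -(psi β j) * (δβ / ((j : ℝ) + 1)) - psi δβ j * (β / ((j : ℝ) + 1))
          + resid β δβ j * (((j : ℝ) - (β + δβ)) / ((j : ℝ) + 1))) ∧
    (∀ j : ℕ, 1 ≤ j → psi (β + δβ) j = psi β j + psi δβ j + resid β δβ j) := by
  refine ⟨?_, ?_, ?_⟩
  · simp [resid, psi]
  · intro j hj
    have hj1 : ((j : ℝ) + 1) ≠ 0 := by positivity
    simp only [resid, psi_succ]
    field_simp
    ring
  · intro j hj; simp [resid]
end

section
/- Let A ∈ ℝ^{n×n}, B ∈ ℝ^{n×p}, α, δα ∈ ℝ^n, and let x : ℕ → ℝ^n, u, ũ : ℕ → ℝ^p be sequences such that B·u[k] = B·ũ[k] − Σ_{j=0}^{k} D̃^{α,δα}_{j+1} · x[k−j] for all k ∈ ℕ. Then x satisfies (Δ^α x)[k+1] = A·x[k] + B·u[k] for all k ∈ ℕ if and only if x satisfies (Δ^{α+δα} x)[k+1] = A·x[k] + B·ũ[k] for all k ∈ ℕ. -/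
/-- fractional-exponent steering via input modification. -/
theorem stmt5 {n p : ℕ} (A : Matrix (Fin n) (Fin n) ℝ) (B : Matrix (Fin n) (Fin p) ℝ)
    (α δα : Fin n → ℝ) (x : ℕ → Fin n → ℝ) (u ut : ℕ → Fin p → ℝ)
    (hu : ∀ k, B.mulVec (u k) =
      B.mulVec (ut k) - ∑ j ∈ Finset.range (k + 1), (Dtil α δα (j + 1)).mulVec (x (k - j))) :
    (∀ k, fracDiff α x k = A.mulVec (x k) + B.mulVec (u k)) ↔
      (∀ k, fracDiff (α + δα) x k = A.mulVec (x k) + B.mulVec (ut k)) := by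
  have key : ∀ k, fracDiff (α + δα) x k = fracDiff α x k +
      ∑ j ∈ Finset.range (k + 1), (Dtil α δα (j + 1)).mulVec (x (k - j)) := by
    intro k
    funext i
    simp only [fracDiff, Dtil, Pi.add_apply, Finset.sum_apply, Matrix.mulVec_diagonal]
    rw [add_assoc, ← Finset.sum_add_distrib]
    congr 1
    apply Finset.sum_congr rfl
    intro j _
    ring
  constructor
  · intro h k
    rw [key, h k, hu k]
    abel
  · intro h k
    have h2 := h k
    rw [key] at h2
    rw [hu k, ← add_sub_assoc]
    exact eq_sub_of_add_eq h2
end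

section
/- Let A ∈ ℝ^{n×n}, B ∈ ℝ^{n×p} such that the linear map w ↦ B·w from ℝ^p to ℝ^n is surjective, let α, δα ∈ ℝ^n, x₀ ∈ ℝ^n, and let ũ : ℕ → ℝ^p be any input sequence. Then there exist a sequence x : ℕ → ℝ^n with x[0] = x₀ and an input sequence u : ℕ → ℝ^p such that for all k ∈ ℕ both (Δ^α x)[k+1] = A·x[k] + B·u[k] and (Δ^{α+δα} x)[k+1] = A·x[k] + B·ũ[k] hold. -/
/-- Auxiliary state sequence defined by the target-network recursion. -/
noncomputable def xseq {n p : ℕ} (A : Matrix (Fin n) (Fin n) ℝ) (B : Matrix (Fin n) (Fin p) ℝ)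
    (β : Fin n → ℝ) (x0 : Fin n → ℝ) (ut : ℕ → Fin p → ℝ) : ℕ → Fin n → ℝ
  | 0 => x0
  | k + 1 => fun i =>
      (A.mulVec (xseq A B β x0 ut k) + B.mulVec (ut k)) i -
        ∑ j ∈ Finset.range (k + 1), psi (β i) (j + 1) * xseq A B β x0 ut (k - j) i
  decreasing_by all_goals omega

/-- with a surjective input matrix, fractional exponents can be steered
for any prescribed input of the target network. -/
theorem stmt6 {n p : ℕ} (A : Matrix (Fin n) (Fin n) ℝ) (B : Matrix (Fin n) (Fin p) ℝ)
    (hB : Function.Surjective B.mulVec)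
    (α δα : Fin n → ℝ) (x0 : Fin n → ℝ) (ut : ℕ → Fin p → ℝ) :
    ∃ (x : ℕ → Fin n → ℝ) (u : ℕ → Fin p → ℝ), x 0 = x0 ∧
      ∀ k, fracDiff α x k = A.mulVec (x k) + B.mulVec (u k) ∧
        fracDiff (α + δα) x k = A.mulVec (x k) + B.mulVec (ut k) := by
  set x := xseq A B (α + δα) x0 ut with hx
  have h2 : ∀ k, fracDiff (α + δα) x k = A.mulVec (x k) + B.mulVec (ut k) := by
    intro k
    funext i
    show x (k + 1) i + _ = _
    rw [hx, xseq]
    ring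
  choose u hu using fun k => hB (fracDiff α x k - A.mulVec (x k))
  refine ⟨x, u, by rw [hx, xseq], fun k => ⟨?_, h2 k⟩⟩
  rw [hu k]
  simp [Pi.add_def]
end

section
/- Let A, A_d ∈ ℝ^{n×n}, B ∈ ℝ^{n×p}, K ∈ ℝ^{p×n} with B·K = A − A_d, let α, δα ∈ ℝ^n, and let x : ℕ → ℝ^n, u, ũ : ℕ → ℝ^p be sequences such that B·u[k] = B·ũ[k] − Σ_{j=0}^{k} D̃^{α,δα}_{j+1} · x[k−j] − B·K·x[k] for all k ∈ ℕ. Then x satisfies (Δ^α x)[k+1] = A·x[k] + B·u[k] for all k ∈ ℕ if and only if x satisfies (Δ^{α+δα} x)[k+1] = A_d·x[k] + B·ũ[k] for all k ∈ ℕ. -/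
lemma key_fracDiff {n : ℕ} (α δα : Fin n → ℝ) (x : ℕ → Fin n → ℝ) (k : ℕ) :
    fracDiff (α + δα) x k = fracDiff α x k +
      ∑ j ∈ Finset.range (k + 1), (Dtil α δα (j + 1)).mulVec (x (k - j)) := by
  funext i
  simp only [fracDiff, Dtil, Pi.add_apply, Finset.sum_apply, Matrix.mulVec_diagonal,
    sub_mul, Finset.sum_sub_distrib]
  ring

/-- combined steering of coupling matrix and fractional exponents. -/
theorem stmt7 {n p : ℕ} (A Ad : Matrix (Fin n) (Fin n) ℝ) (B : Matrix (Fin n) (Fin p) ℝ)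
    (K : Matrix (Fin p) (Fin n) ℝ) (hK : B * K = A - Ad)
    (α δα : Fin n → ℝ) (x : ℕ → Fin n → ℝ) (u ut : ℕ → Fin p → ℝ)
    (hu : ∀ k, B.mulVec (u k) =
      B.mulVec (ut k) - (∑ j ∈ Finset.range (k + 1), (Dtil α δα (j + 1)).mulVec (x (k - j)))
        - (B * K).mulVec (x k)) :
    (∀ k, fracDiff α x k = A.mulVec (x k) + B.mulVec (u k)) ↔
      (∀ k, fracDiff (α + δα) x k = Ad.mulVec (x k) + B.mulVec (ut k)) := by
  constructor
  · intro h k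
    rw [key_fracDiff, h k, hu k, hK, Matrix.sub_mulVec]
    abel
  · intro h k
    have hk := key_fracDiff α δα x k
    rw [h k] at hk
    have : fracDiff α x k = Ad.mulVec (x k) + B.mulVec (ut k)
        - ∑ j ∈ Finset.range (k + 1), (Dtil α δα (j + 1)).mulVec (x (k - j)) := by
      rw [eq_sub_iff_add_eq, ← hk]
    rw [this, hu k, hK, Matrix.sub_mulVec]
    abel
end

section
/- Let A_d ∈ ℝ^{n×n}, B ∈ ℝ^{n×p}, α_d ∈ ℝ^n, and let x : ℕ → ℝ^n, ũ : ℕ → ℝ^p be sequences satisfying x[k+1] = Σ_{j=0}^{k} Ã_j · x[k−j] + B·ũ[k] for all k ∈ ℕ. Then for every k ∈ ℕ, x[k] = G_k · x[0] + Σ_{j=0}^{k−1} G_{k−1−j} · B · ũ[j]. -/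
/-- closed-form state evolution via fractional state-transition matrices. -/
theorem stmt9 {n p : ℕ} (Ad : Matrix (Fin n) (Fin n) ℝ) (B : Matrix (Fin n) (Fin p) ℝ)
    (αd : Fin n → ℝ) (x : ℕ → Fin n → ℝ) (ut : ℕ → Fin p → ℝ)
    (hx : ∀ k, x (k + 1) =
      (∑ j ∈ Finset.range (k + 1), (Atil Ad αd j).mulVec (x (k - j))) + B.mulVec (ut k)) :
    ∀ k, x k = (Gmat Ad αd k).mulVec (x 0)
      + ∑ j ∈ Finset.range k, (Gmat Ad αd (k - 1 - j)).mulVec (B.mulVec (ut j)) := by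
  have sum_mulVec : ∀ (s : Finset ℕ) (A : ℕ → Matrix (Fin n) (Fin n) ℝ) (v : Fin n → ℝ),
      (∑ j ∈ s, A j).mulVec v = ∑ j ∈ s, (A j).mulVec v := by
    intro s A v
    induction s using Finset.cons_induction with
    | empty => simp [Matrix.zero_mulVec]
    | cons a s ha ih => simp [Finset.sum_insert ha, Matrix.add_mulVec, ih]
  have mulVec_sum : ∀ (s : Finset ℕ) (A : Matrix (Fin n) (Fin n) ℝ) (v : ℕ → Fin n → ℝ),
      A.mulVec (∑ j ∈ s, v j) = ∑ j ∈ s, A.mulVec (v j) := by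
    intro s A v
    induction s using Finset.cons_induction with
    | empty => simp [Matrix.mulVec_zero]
    | cons a s ha ih => simp [Finset.sum_insert ha, Matrix.mulVec_add, ih]
  intro k
  induction k using Nat.strong_induction_on with
  | _ k ih =>
    match k with
    | 0 => simp [Gmat]
    | Nat.succ k =>
      rw [hx k]
      have hxk : ∀ j ∈ Finset.range (k + 1),
          (Atil Ad αd j).mulVec (x (k - j)) =
          (Atil Ad αd j * Gmat Ad αd (k - j)).mulVec (x 0)
          + ∑ i ∈ Finset.range (k - j),
              (Atil Ad αd j).mulVec ((Gmat Ad αd (k - j - 1 - i)).mulVec (B.mulVec (ut i))) := by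
        intro j hj
        rw [ih (k - j) (by omega), Matrix.mulVec_add, mulVec_sum, Matrix.mulVec_mulVec]
      rw [Finset.sum_congr rfl hxk, Finset.sum_add_distrib]
      have h1 : ∑ j ∈ Finset.range (k + 1), (Atil Ad αd j * Gmat Ad αd (k - j)).mulVec (x 0)
          = (Gmat Ad αd (k + 1)).mulVec (x 0) := by
        rw [show Gmat Ad αd (k + 1)
            = ∑ j ∈ Finset.range (k + 1), Atil Ad αd j * Gmat Ad αd (k - j) from by rw [Gmat], sum_mulVec]
      have h2 : (∑ j ∈ Finset.range (k + 1), ∑ i ∈ Finset.range (k - j),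
            (Atil Ad αd j).mulVec ((Gmat Ad αd (k - j - 1 - i)).mulVec (B.mulVec (ut i))))
          = ∑ i ∈ Finset.range k, (Gmat Ad αd (k - i)).mulVec (B.mulVec (ut i)) := by
        rw [Finset.sum_comm' (s' := fun i => Finset.range (k - i)) (t' := Finset.range k)
          (by intro a b; simp only [Finset.mem_range]; omega)]
        refine Finset.sum_congr rfl ?_
        intro i hi
        simp only [Finset.mem_range] at hi
        obtain ⟨m, hm⟩ : ∃ m, k - i = m + 1 := ⟨k - i - 1, by omega⟩
        rw [hm, show Gmat Ad αd (m + 1)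
            = ∑ j ∈ Finset.range (m + 1), Atil Ad αd j * Gmat Ad αd (m - j) from by rw [Gmat], sum_mulVec]
        refine Finset.sum_congr rfl ?_
        intro j hj
        simp only [Finset.mem_range] at hj
        rw [Matrix.mulVec_mulVec, show k - j - 1 - i = m - j by omega]
      rw [h1, h2, Finset.sum_range_succ]
      simp only [Nat.succ_sub_one, Nat.sub_self, Gmat, Matrix.one_mulVec]
      rw [add_assoc]
end

section
/- Let A_d ∈ ℝ^{n×n}, B ∈ ℝ^{n×p}, α_d ∈ ℝ^n, T ∈ ℕ with T ≥ 1, and suppose the linear map L : (ℝ^p)^T → ℝ^n given by L(ũ_0,…,ũ_{T−1}) := Σ_{j=0}^{T−1} G_{T−1−j} · B · ũ_j is surjective. Then for every x₀, x_d ∈ ℝ^n there exist an input sequence ũ : ℕ → ℝ^p and a sequence x : ℕ → ℝ^n with x[0] = x₀ satisfying x[k+1] = Σ_{j=0}^{k} Ã_j · x[k−j] + B·ũ[k] for all k ∈ ℕ and x[T] = x_d. -/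
/- helper lemmas -/

lemma mulVec_sum' {n m : ℕ} (A : Matrix (Fin n) (Fin m) ℝ) {ι : Type*} (s : Finset ι)
    (f : ι → Fin m → ℝ) : A.mulVec (∑ i ∈ s, f i) = ∑ i ∈ s, A.mulVec (f i) :=
  map_sum A.mulVecLin f s

lemma sum_mulVec' {n m : ℕ} {ι : Type*} (s : Finset ι) (A : ι → Matrix (Fin n) (Fin m) ℝ)
    (v : Fin m → ℝ) : (∑ i ∈ s, A i).mulVec v = ∑ i ∈ s, (A i).mulVec v := by
  classical
  induction s using Finset.induction_on with
  | empty => simp [Matrix.mulVec, dotProduct]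
  | insert _ _ h ih => simp [Finset.sum_insert h, Matrix.add_mulVec, ih]

lemma sum_tri {M : Type*} [AddCommMonoid M] (k : ℕ) (f : ℕ → ℕ → M) :
    ∑ j ∈ Finset.range k, ∑ i ∈ Finset.range (k - j), f j i
      = ∑ i ∈ Finset.range k, ∑ j ∈ Finset.range (k - i), f j i := by
  have key : ∀ (g : ℕ → ℕ → M) (j : ℕ), j < k →
      ∑ i ∈ Finset.range (k - j), g j i
        = ∑ i ∈ Finset.range k, if j + i < k then g j i else 0 := by
    intro g j hj
    rw [← Finset.sum_filter]
    congr 1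
    ext i
    simp only [Finset.mem_filter, Finset.mem_range]
    omega
  calc ∑ j ∈ Finset.range k, ∑ i ∈ Finset.range (k - j), f j i
      = ∑ j ∈ Finset.range k, ∑ i ∈ Finset.range k, if j + i < k then f j i else 0 :=
        Finset.sum_congr rfl fun j hj => key f j (Finset.mem_range.mp hj)
    _ = ∑ i ∈ Finset.range k, ∑ j ∈ Finset.range k, if j + i < k then f j i else 0 :=
        Finset.sum_comm
    _ = ∑ i ∈ Finset.range k, ∑ j ∈ Finset.range (k - i), f j i := by
        refine Finset.sum_congr rfl fun i hi => ?_
        rw [key (fun i j => f j i) i (Finset.mem_range.mp hi)]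
        exact Finset.sum_congr rfl fun j _ => by rw [Nat.add_comm]

noncomputable def traj {n p : ℕ} (Ad : Matrix (Fin n) (Fin n) ℝ) (αd : Fin n → ℝ)
    (B : Matrix (Fin n) (Fin p) ℝ) (u : ℕ → Fin p → ℝ) (x0 : Fin n → ℝ) : ℕ → Fin n → ℝ
  | 0 => x0
  | k + 1 => (∑ j ∈ Finset.range (k + 1), (Atil Ad αd j).mulVec (traj Ad αd B u x0 (k - j)))
      + B.mulVec (u k)
  decreasing_by omega

lemma traj_eq {n p : ℕ} (Ad : Matrix (Fin n) (Fin n) ℝ) (αd : Fin n → ℝ)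
    (B : Matrix (Fin n) (Fin p) ℝ) (u : ℕ → Fin p → ℝ) (x0 : Fin n → ℝ) (k : ℕ) :
    traj Ad αd B u x0 k = (Gmat Ad αd k).mulVec x0
      + ∑ j ∈ Finset.range k, (Gmat Ad αd (k - 1 - j)).mulVec (B.mulVec (u j)) := by
  induction k using Nat.strong_induction_on with
  | _ k ih =>
  match k with
  | 0 => simp [traj, Gmat, Matrix.one_mulVec]
  | Nat.succ k =>
    rw [traj]
    have hstep : ∀ j ∈ Finset.range (k + 1),
        (Atil Ad αd j).mulVec (traj Ad αd B u x0 (k - j))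
          = (Atil Ad αd j * Gmat Ad αd (k - j)).mulVec x0
            + ∑ i ∈ Finset.range (k - j),
                (Atil Ad αd j * Gmat Ad αd (k - j - 1 - i)).mulVec (B.mulVec (u i)) := by
      intro j hj
      rw [ih (k - j) (by omega), Matrix.mulVec_add, mulVec_sum']
      simp only [Matrix.mulVec_mulVec, Matrix.mul_assoc]
    rw [Finset.sum_congr rfl hstep, Finset.sum_add_distrib]
    have h1 : ∑ j ∈ Finset.range (k + 1), (Atil Ad αd j * Gmat Ad αd (k - j)).mulVec x0
        = (Gmat Ad αd (k + 1)).mulVec x0 := by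
      conv_rhs => rw [Gmat]
      rw [sum_mulVec']
    have h2 : ∑ j ∈ Finset.range (k + 1), ∑ i ∈ Finset.range (k - j),
          (Atil Ad αd j * Gmat Ad αd (k - j - 1 - i)).mulVec (B.mulVec (u i))
        = ∑ i ∈ Finset.range k, (Gmat Ad αd (k - i)).mulVec (B.mulVec (u i)) := by
      rw [Finset.sum_range_succ]
      simp only [Nat.sub_self, Finset.range_zero, Finset.sum_empty, add_zero]
      rw [sum_tri]
      refine Finset.sum_congr rfl fun i hi => ?_
      have hik : i < k := Finset.mem_range.mp hi
      obtain ⟨m, hm⟩ : ∃ m, k - i = m + 1 := ⟨k - i - 1, by omega⟩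
      rw [hm]
      conv_rhs => rw [Gmat]
      rw [sum_mulVec']
      refine Finset.sum_congr rfl fun j hj => ?_
      have : k - j - 1 - i = m - j := by omega
      rw [this]
    rw [h1, h2]
    have h3 : ∑ j ∈ Finset.range (k + 1), (Gmat Ad αd (k + 1 - 1 - j)).mulVec (B.mulVec (u j))
        = (∑ j ∈ Finset.range k, (Gmat Ad αd (k - j)).mulVec (B.mulVec (u j)))
          + B.mulVec (u k) := by
      simp only [Nat.add_sub_cancel]
      rw [Finset.sum_range_succ, Nat.sub_self, show Gmat Ad αd 0 = 1 by rw [Gmat],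
        Matrix.one_mulVec]
    rw [h3]
    abel

/-- surjectivity of the fractional reachability map implies any terminal state
is reachable in T steps. -/
theorem stmt10 {n p : ℕ} (Ad : Matrix (Fin n) (Fin n) ℝ) (B : Matrix (Fin n) (Fin p) ℝ)
    (αd : Fin n → ℝ) (T : ℕ) (hT : 1 ≤ T)
    (hL : Function.Surjective fun us : Fin T → Fin p → ℝ =>
      ∑ j : Fin T, (Gmat Ad αd (T - 1 - (j : ℕ))).mulVec (B.mulVec (us j))) :
    ∀ x0 xd : Fin n → ℝ, ∃ (ut : ℕ → Fin p → ℝ) (x : ℕ → Fin n → ℝ),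
      x 0 = x0 ∧
      (∀ k, x (k + 1) =
        (∑ j ∈ Finset.range (k + 1), (Atil Ad αd j).mulVec (x (k - j))) + B.mulVec (ut k)) ∧
      x T = xd := by
  intro x0 xd
  obtain ⟨us, hus⟩ := hL (xd - (Gmat Ad αd T).mulVec x0)
  set u : ℕ → Fin p → ℝ := fun k => if h : k < T then us ⟨k, h⟩ else 0 with hu
  refine ⟨u, traj Ad αd B u x0, by rw [traj], fun k => by rw [traj], ?_⟩
  rw [traj_eq]
  have hsum : ∑ j ∈ Finset.range T, (Gmat Ad αd (T - 1 - j)).mulVec (B.mulVec (u j))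
      = ∑ j : Fin T, (Gmat Ad αd (T - 1 - (j : ℕ))).mulVec (B.mulVec (us j)) := by
    rw [← Fin.sum_univ_eq_sum_range]
    refine Finset.sum_congr rfl fun j _ => ?_
    simp [hu, j.isLt]
  dsimp only at hus
  rw [hsum, hus]
  abel
end
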